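/- arXiv:2409.02652 — 3 statements merged into one kernel-verified Lean document; each statement's English description precedes it below -/
import Mathlib

section
/- If the matrix M is symmetric positive definite and B has rank n_p (equivalently, Bᵀ has full column rank), then the (n_u+n_p)×(n_u+n_p) block saddle-point matrix [[M, Bᵀ],[B, 0]] is invertible. -/
open Matrix

namespace Matrix

variable {m n K : Type*} [Fintype m] [Fintype n] [Field K]

theorem vecMul_injective_of_rank_eq_card {B : Matrix m n K}
    (hB : B.rank = Fintype.card m) : Function.Injective B.vecMul := by
  rw [vecMul_injective_iff, linearIndependent_iff_card_eq_finrank_span, ← hB,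
    rank_eq_finrank_span_row]
  rfl

/-- The Schur complement of `A` is `-(B * A⁻¹ * Bᴴ)`, and `B * A⁻¹ * Bᴴ` is positive definite. -/
theorem isUnit_fromBlocks_conjTranspose_zero [PartialOrder K] [StarRing K]
    [DecidableEq m] [DecidableEq n] {A : Matrix n n K} (hA : A.PosDef) {B : Matrix m n K}
    (hB : Function.Injective B.vecMul) : IsUnit (fromBlocks A Bᴴ B 0) := by
  have := hA.isUnit.invertible
  rw [isUnit_fromBlocks_iff_of_invertible₁₁, invOf_eq_nonsing_inv, zero_sub, IsUnit.neg_iff]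
  exact (hA.inv.mul_mul_conjTranspose_same hB).isUnit

end Matrix

theorem stmt_3_general (nu np : ℕ)
    (M : Matrix (Fin nu) (Fin nu) ℝ) (hM : M.PosDef)
    (B : Matrix (Fin np) (Fin nu) ℝ) (hB : B.rank = np) :
    IsUnit (Matrix.fromBlocks M Bᵀ B (0 : Matrix (Fin np) (Fin np) ℝ)) := by
  have hB_inj : Function.Injective B.vecMul :=
    vecMul_injective_of_rank_eq_card (hB.trans (Fintype.card_fin np).symm)
  rw [← conjTranspose_eq_transpose_of_trivial]
  exact isUnit_fromBlocks_conjTranspose_zero hM hB_inj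

/-- If `M` is SPD and `B` has full row rank `n_p`, the saddle-point block
matrix `[[M, Bᵀ],[B, 0]]` is invertible. -/
theorem stmt_3 (nu np : ℕ) (hnu : 0 < nu) (hnp : 0 < np) (hle : np ≤ nu)
    (M : Matrix (Fin nu) (Fin nu) ℝ) (hM : M.PosDef)
    (B : Matrix (Fin np) (Fin nu) ℝ) (hB : B.rank = np) :
    IsUnit (Matrix.fromBlocks M Bᵀ B (0 : Matrix (Fin np) (Fin np) ℝ)) :=
  stmt_3_general nu np M hM B hB
end

section
/- If B has rank n_p, then the subspace { x ∈ ℝ^{n_u+n_p} : Ā x = P x } has dimension at least n_u − n_p; that is, the eigenvalue 1 of the preconditioned matrix P⁻¹ Ā has geometric multiplicity at least n_u − n_p. -/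
/-!
The leading blocks `A + γS` of `Ā` and `P` coincide, so `Ā - P = [[0, C], [B, D]]` and every
`(u, 0)` with `Bu = 0` lies in its kernel. By rank–nullity `ker B` has dimension `n_u - n_p`.
-/

open Matrix

namespace Matrix

variable {l m n o K : Type*}

theorem fromBlocks_sub [AddGroup K] (A : Matrix n l K) (B : Matrix n m K) (C : Matrix o l K)
    (D : Matrix o m K) (A' : Matrix n l K) (B' : Matrix n m K) (C' : Matrix o l K)
    (D' : Matrix o m K) :
    fromBlocks A B C D - fromBlocks A' B' C' D' =
      fromBlocks (A - A') (B - B') (C - C') (D - D') := by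
  simp only [sub_eq_add_neg, fromBlocks_neg, fromBlocks_add]

variable [Field K] [Fintype n]

theorem finrank_ker_mulVecLin_add_rank (B : Matrix m n K) :
    Module.finrank K (LinearMap.ker B.mulVecLin) + B.rank = Fintype.card n := by
  rw [add_comm, rank, LinearMap.finrank_range_add_finrank_ker, Module.finrank_fintype_fun_eq_card]

theorem finrank_ker_mulVecLin_le_finrank_ker_fromBlocks_zero [Fintype m] (C : Matrix n m K)
    (B : Matrix m n K) (D : Matrix m m K) :
    Module.finrank K (LinearMap.ker B.mulVecLin) ≤
      Module.finrank K (LinearMap.ker (fromBlocks 0 C B D).mulVecLin) := by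
  have hmaps : ∀ u ∈ LinearMap.ker B.mulVecLin,
      Sum.elimZeroRight (κ := m) u ∈ LinearMap.ker (fromBlocks 0 C B D).mulVecLin := by
    intro u hu
    rw [LinearMap.mem_ker, mulVecLin_apply] at hu ⊢
    change fromBlocks 0 C B D *ᵥ Sum.elim u 0 = 0
    rw [fromBlocks_mulVec]
    ext (i | i) <;> simp [hu]
  refine LinearMap.finrank_le_finrank_of_injective
    (f := Sum.elimZeroRight.restrict hmaps) fun u v huv => ?_
  ext i
  simpa using congrFun (congrArg Subtype.val huv) (Sum.inl i)

end Matrix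

theorem stmt_8_general (nu np : ℕ)
    (A : Matrix (Fin nu) (Fin nu) ℝ)
    (B : Matrix (Fin np) (Fin nu) ℝ) (hB : B.rank = np)
    (Q : Matrix (Fin np) (Fin np) ℝ)
    (γ α : ℝ)
    (S : Matrix (Fin nu) (Fin nu) ℝ)
    (Abar P : Matrix (Fin nu ⊕ Fin np) (Fin nu ⊕ Fin np) ℝ)
    (hAbar : Abar = Matrix.fromBlocks (A + γ • S) Bᵀ B 0)
    (hP : P = Matrix.fromBlocks (A + γ • S) ((1 - γ / α) • Bᵀ)
        0 ((-α⁻¹) • Q)) :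
    nu - np ≤ Module.finrank ℝ
      ↥(LinearMap.ker (Matrix.mulVecLin (Abar - P))) := by
  have hker := B.finrank_ker_mulVecLin_add_rank
  rw [hB, Fintype.card_fin] at hker
  rw [hAbar, hP, fromBlocks_sub, sub_self, sub_zero]
  calc nu - np = Module.finrank ℝ (LinearMap.ker B.mulVecLin) := by omega
    _ ≤ _ := finrank_ker_mulVecLin_le_finrank_ker_fromBlocks_zero _ B _

/-- If `B` has rank `n_p`, the eigenspace `{x : Ā x = P x}` of the eigenvalue 1
of `P⁻¹ Ā` has dimension at least `n_u − n_p`. -/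
theorem stmt_8 (nu np : ℕ) (hnu : 0 < nu) (hnp : 0 < np) (hle : np ≤ nu)
    (A : Matrix (Fin nu) (Fin nu) ℝ) (hA : A.PosDef)
    (B : Matrix (Fin np) (Fin nu) ℝ) (hB : B.rank = np)
    (Q : Matrix (Fin np) (Fin np) ℝ) (hQ : Q.PosDef)
    (γ α : ℝ) (hγ : 0 < γ) (hα : 0 < α)
    (S : Matrix (Fin nu) (Fin nu) ℝ) (hS : S = Bᵀ * Q⁻¹ * B)
    (Abar P : Matrix (Fin nu ⊕ Fin np) (Fin nu ⊕ Fin np) ℝ)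
    (hAbar : Abar = Matrix.fromBlocks (A + γ • S) Bᵀ B 0)
    (hP : P = Matrix.fromBlocks (A + γ • S) ((1 - γ / α) • Bᵀ)
        0 ((-α⁻¹) • Q)) :
    nu - np ≤ Module.finrank ℝ
      ↥(LinearMap.ker (Matrix.mulVecLin (Abar - P))) :=
  stmt_8_general nu np A B hB Q γ α S Abar P hAbar hP
end

section
/- If λ ∈ ℝ with λ ≠ 0 and λ ≠ 1, and (u; p) ∈ ℝ^{n_u+n_p} satisfies Ā (u; p) = λ P (u; p), then p = −(α/λ) Q⁻¹ B u and u satisfies the quadratic matrix equation λ² (A + γS) u − λ (A + αS) u + α S u = 0. -/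
open Matrix

/-! The second block row says `Q p = -(α/λ) B u`, hence `p = -(α/λ) Q⁻¹ B u` and `Bᵀ p = -(α/λ) S u`.
Substituting this into the first block row and multiplying by `-λ` gives the quadratic equation. -/

theorem Sum.smul_elim {α β γ R : Type*} [SMul R γ] (c : R) (f : α → γ) (g : β → γ) :
    c • Sum.elim f g = Sum.elim (c • f) (c • g) := by
  ext (a | b) <;> rfl

theorem fromBlocks_mulVec_sumElim_eq_smul_iff {l m n o R : Type*} [Fintype l] [Fintype m]
    [CommSemiring R] {A A' : Matrix n l R} {B B' : Matrix n m R} {C C' : Matrix o l R}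
    {D D' : Matrix o m R} {c : R} {u : l → R} {p : m → R} :
    fromBlocks A B C D *ᵥ Sum.elim u p = c • fromBlocks A' B' C' D' *ᵥ Sum.elim u p ↔
      A *ᵥ u + B *ᵥ p = c • (A' *ᵥ u + B' *ᵥ p) ∧ C *ᵥ u + D *ᵥ p = c • (C' *ᵥ u + D' *ᵥ p) := by
  simp only [fromBlocks_mulVec, Sum.elim_comp_inl, Sum.elim_comp_inr, Sum.smul_elim,
    Sum.elim_eq_iff]

theorem eq_smul_inv_mulVec_of_mulVec_eq_smul {m n K : Type*} [Fintype m] [Fintype n]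
    [DecidableEq n] [Field K] {Q : Matrix n n K} (hQ : IsUnit Q.det) {B : Matrix n m K}
    {u : m → K} {p : n → K} {α lam : K} (hα : α ≠ 0) (hlam : lam ≠ 0)
    (h : B *ᵥ u = lam • ((-α⁻¹) • Q) *ᵥ p) :
    p = (-(α / lam)) • (Q⁻¹ * B) *ᵥ u := by
  rw [← mulVec_mulVec, h, smul_mulVec, mulVec_smul, mulVec_smul, mulVec_mulVec,
    nonsing_inv_mul Q hQ, one_mulVec, smul_smul, smul_smul,
    show -(α / lam) * lam * -α⁻¹ = 1 by field_simp, one_smul]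

theorem quadratic_eigen_relation {K V : Type*} [Field K] [AddCommGroup V] [Module K V]
    {x y : V} {α γ lam : K} (hα : α ≠ 0) (hlam : lam ≠ 0)
    (h : x + γ • y + (-(α / lam)) • y = lam • (x + γ • y + (1 - γ / α) • (-(α / lam)) • y)) :
    lam ^ 2 • (x + γ • y) - lam • (x + α • y) + α • y = 0 := by
  linear_combination (norm := skip) (-lam) • h
  match_scalars <;> field_simp <;> ring

theorem stmt_11_general (nu np : ℕ)
    (A : Matrix (Fin nu) (Fin nu) ℝ)
    (B : Matrix (Fin np) (Fin nu) ℝ)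
    (Q : Matrix (Fin np) (Fin np) ℝ) (hQ : Q.PosDef)
    (γ α : ℝ) (hα : 0 < α)
    (S : Matrix (Fin nu) (Fin nu) ℝ) (hS : S = Bᵀ * Q⁻¹ * B)
    (Abar P : Matrix (Fin nu ⊕ Fin np) (Fin nu ⊕ Fin np) ℝ)
    (hAbar : Abar = Matrix.fromBlocks (A + γ • S) Bᵀ B 0)
    (hP : P = Matrix.fromBlocks (A + γ • S) ((1 - γ / α) • Bᵀ)
        0 ((-α⁻¹) • Q))
    (lam : ℝ) (hlam0 : lam ≠ 0)
    (u : Fin nu → ℝ) (p : Fin np → ℝ)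
    (heig : Abar.mulVec (Sum.elim u p) = lam • P.mulVec (Sum.elim u p)) :
    p = (-(α / lam)) • (Q⁻¹ * B).mulVec u ∧
      lam ^ 2 • (A + γ • S).mulVec u - lam • (A + α • S).mulVec u
        + α • S.mulVec u = 0 := by
  subst hAbar hP
  obtain ⟨hupper, hlower⟩ := fromBlocks_mulVec_sumElim_eq_smul_iff.mp heig
  have hp : p = (-(α / lam)) • (Q⁻¹ * B) *ᵥ u :=
    eq_smul_inv_mulVec_of_mulVec_eq_smul hQ.det_pos.ne'.isUnit hα.ne' hlam0
      (by simpa only [zero_mulVec, add_zero, zero_add] using hlower)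
  refine ⟨hp, ?_⟩
  have hBp : Bᵀ *ᵥ p = (-(α / lam)) • S *ᵥ u := by
    rw [hp, mulVec_smul, mulVec_mulVec, hS, Matrix.mul_assoc]
  rw [smul_mulVec, hBp] at hupper
  simp only [add_mulVec, smul_mulVec] at hupper ⊢
  exact quadratic_eigen_relation hα.ne' hlam0 hupper

/-- If `λ ≠ 0`, `λ ≠ 1` and `Ā (u; p) = λ P (u; p)`, then
`p = −(α/λ) Q⁻¹ B u` and `λ²(A + γS)u − λ(A + αS)u + αSu = 0`. -/
theorem stmt_11 (nu np : ℕ) (hnu : 0 < nu) (hnp : 0 < np)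
    (A : Matrix (Fin nu) (Fin nu) ℝ) (hA : A.PosDef)
    (B : Matrix (Fin np) (Fin nu) ℝ)
    (Q : Matrix (Fin np) (Fin np) ℝ) (hQ : Q.PosDef)
    (γ α : ℝ) (hγ : 0 < γ) (hα : 0 < α)
    (S : Matrix (Fin nu) (Fin nu) ℝ) (hS : S = Bᵀ * Q⁻¹ * B)
    (Abar P : Matrix (Fin nu ⊕ Fin np) (Fin nu ⊕ Fin np) ℝ)
    (hAbar : Abar = Matrix.fromBlocks (A + γ • S) Bᵀ B 0)
    (hP : P = Matrix.fromBlocks (A + γ • S) ((1 - γ / α) • Bᵀ)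
        0 ((-α⁻¹) • Q))
    (lam : ℝ) (hlam0 : lam ≠ 0) (hlam1 : lam ≠ 1)
    (u : Fin nu → ℝ) (p : Fin np → ℝ)
    (heig : Abar.mulVec (Sum.elim u p) = lam • P.mulVec (Sum.elim u p)) :
    p = (-(α / lam)) • (Q⁻¹ * B).mulVec u ∧
      lam ^ 2 • (A + γ • S).mulVec u - lam • (A + α • S).mulVec u
        + α • S.mulVec u = 0 :=
  stmt_11_general nu np A B Q hQ γ α hα S hS Abar P hAbar hP lam hlam0 u p heig
end
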